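/- arXiv:1701.05277 — 2 statements merged into one kernel-verified Lean document; each statement's English description precedes it below -/
import Mathlib

section
/- Let w1, w2 be complementary words of length n (then w2, w1 are also complementary). There is a ℂ-linear isomorphism Φ from the Specht module V(w2, w1) ⊆ ℂ^{R(w2)} onto the dual space of the Specht module V(w1, w2) ⊆ ℂ^{R(w1)} satisfying Φ(σ·u) = sign(σ)·(σ·Φ(u)) for all σ ∈ S_n and u ∈ V(w2, w1), where S_n acts on the dual space by (σ·φ)(v) = φ(σ⁻¹·v). In other words, V(λ*) is isomorphic as an S_n-representation to V(λ)^∨ ⊗ ε, where ε is the sign representation and λ, λ* are the partition and conjugate partition corresponding to (w1, w2) and (w2, w1). -/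
/-- The action of a permutation on a word: `σ · w = w ∘ σ⁻¹`. -/
def wact {n : ℕ} (σ : Equiv.Perm (Fin n)) (w : Fin n → ℕ) : Fin n → ℕ :=
  w ∘ σ.symm

/-- `r` is a rearrangement of `w`. -/
def IsRearr {n : ℕ} (w r : Fin n → ℕ) : Prop :=
  ∃ σ : Equiv.Perm (Fin n), wact σ w = r

/-- The type of rearrangements of a word `w`. -/
abbrev Rearr {n : ℕ} (w : Fin n → ℕ) : Type :=
  {r : Fin n → ℕ // IsRearr w r}

theorem wact_wact {n : ℕ} (σ τ : Equiv.Perm (Fin n)) (w : Fin n → ℕ) :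
    wact σ (wact τ w) = wact (σ * τ) w := rfl

/-- The action of a permutation on the type of rearrangements of `w`. -/
def ract {n : ℕ} {w : Fin n → ℕ} (σ : Equiv.Perm (Fin n)) (r : Rearr w) : Rearr w :=
  ⟨wact σ r.1, by
    obtain ⟨τ, hτ⟩ := r.2
    exact ⟨σ * τ, by rw [← hτ, wact_wact]⟩⟩

instance {n : ℕ} (w : Fin n → ℕ) : Finite (Rearr w) :=
  Finite.of_surjective (fun σ : Equiv.Perm (Fin n) => (⟨wact σ w, σ, rfl⟩ : Rearr w))
    (fun r => by obtain ⟨r, σ, hσ⟩ := r; exact ⟨σ, Subtype.ext hσ⟩)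

noncomputable instance {n : ℕ} (w : Fin n → ℕ) : Fintype (Rearr w) :=
  Fintype.ofFinite _

/-- Young's character `Y(r1, r2) = Σ sign σ` over all `σ` with `σ·w1 = r1` and `σ·w2 = r2`. -/
def youngChar {n : ℕ} (w1 w2 : Fin n → ℕ) (r1 r2 : Fin n → ℕ) : ℤ :=
  ∑ σ : Equiv.Perm (Fin n),
    if wact σ w1 = r1 ∧ wact σ w2 = r2 then (Equiv.Perm.sign σ : ℤ) else 0

/-- A pair of words has trivial (diagonal) stabilizer. -/
def FreePair {n : ℕ} (p : (Fin n → ℕ) × (Fin n → ℕ)) : Prop :=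
  ∀ σ : Equiv.Perm (Fin n), wact σ p.1 = p.1 → wact σ p.2 = p.2 → σ = 1

/-- The diagonal action on `R(w1) × R(w2)` has exactly one free orbit. -/
def HaveComplRearr {n : ℕ} (w1 w2 : Fin n → ℕ) : Prop :=
  (∃ p : (Fin n → ℕ) × (Fin n → ℕ), IsRearr w1 p.1 ∧ IsRearr w2 p.2 ∧ FreePair p) ∧
  ∀ p q : (Fin n → ℕ) × (Fin n → ℕ),
    IsRearr w1 p.1 → IsRearr w2 p.2 → FreePair p →
    IsRearr w1 q.1 → IsRearr w2 q.2 → FreePair q →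
    ∃ σ : Equiv.Perm (Fin n), wact σ p.1 = q.1 ∧ wact σ p.2 = q.2

/-- `w1, w2` are complementary: there is a unique free orbit and `(w1, w2)` lies in it. -/
def Complementary {n : ℕ} (w1 w2 : Fin n → ℕ) : Prop :=
  HaveComplRearr w1 w2 ∧ FreePair (w1, w2)

/-- A column of the Specht matrix, as a complex vector indexed by `R(w1)`. -/
noncomputable def spechtCol {n : ℕ} (w1 w2 : Fin n → ℕ) (r2 : Rearr w2) : Rearr w1 → ℂ :=
  fun r1 => (youngChar w1 w2 r1.1 r2.1 : ℂ)

/-- The Specht module: the span of the columns of the Specht matrix. -/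
noncomputable def SpechtModule {n : ℕ} (w1 w2 : Fin n → ℕ) : Submodule ℂ (Rearr w1 → ℂ) :=
  Submodule.span ℂ (Set.range (spechtCol w1 w2))

/-- A column of the real Specht matrix. -/
noncomputable def spechtColR {n : ℕ} (w1 w2 : Fin n → ℕ) (r2 : Rearr w2) : Rearr w1 → ℝ :=
  fun r1 => (youngChar w1 w2 r1.1 r2.1 : ℝ)

/-- The Specht polytope: the convex hull of the columns of the real Specht matrix. -/
noncomputable def SpechtPolytope {n : ℕ} (w1 w2 : Fin n → ℕ) : Set (Rearr w1 → ℝ) :=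
  convexHull ℝ (Set.range (spechtColR w1 w2))

/-- The `S_n`-action on complex-valued functions on `R(w)`: `(σ·f)(r) = f(σ⁻¹·r)`. -/
def factC {n : ℕ} {w : Fin n → ℕ} (σ : Equiv.Perm (Fin n)) (f : Rearr w → ℂ) :
    Rearr w → ℂ :=
  fun r => f (ract σ⁻¹ r)

/-- A weakly decreasing list of positive integers (a partition shape). -/
def SortedPartList (l : List ℕ) : Prop :=
  l.Pairwise (· ≥ ·) ∧ ∀ x ∈ l, 0 < x

/-- The multiset of letter multiplicities of a word. -/
def multMultiset {n : ℕ} (w : Fin n → ℕ) : Multiset ℕ :=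
  (Finset.image w Finset.univ).val.map
    (fun v => (Finset.univ.filter (fun i => w i = v)).card)

/-- The decreasingly sorted letter multiplicities of `w` are given by the list `l`. -/
def HasMultiplicities {n : ℕ} (w : Fin n → ℕ) (l : List ℕ) : Prop :=
  SortedPartList l ∧ (l : Multiset ℕ) = multMultiset w

/-- The conjugate partition, as a list: `λ*_i = #{k : λ_k ≥ i}`. -/
def conjList (l : List ℕ) : List ℕ :=
  (List.range (l.getD 0 0)).map (fun j => (l.filter (fun x => j + 1 ≤ x)).length)

/-- The complementary pair `(w1, w2)` corresponds to the partition `l`. -/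
def CorrespondsTo {n : ℕ} (w1 w2 : Fin n → ℕ) (l : List ℕ) : Prop :=
  HasMultiplicities w1 l ∧ HasMultiplicities w2 (conjList l)

/-! Let `M` be the Specht matrix of `(w1, w2)`. Young's character is symmetric in its two
arguments, so the Specht matrix of `(w2, w1)` is `Mᵀ`: `V(w2, w1)` is the row space and
`V(w1, w2)` the column space of `M`. The dot product pairs them perfectly, `Mᵀ *ᵥ a` acting
as `v ↦ a ⬝ᵥ v`: this functional vanishes exactly when `Mᵀ *ᵥ a` does, and every functional on
the column space extends to one on `ℂ^{R(w1)}`, i.e. is a dot product.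
The dot product is `S_n`-invariant while `Y(σ·r1, σ·r2) = sign σ * Y(r1, r2)`, which produces
the sign twist. -/

open Matrix

section DualOfColumnSpace

variable {K m n : Type*} [Field K] [Fintype m] [Fintype n] [DecidableEq m]

noncomputable def Submodule.dotProductDual (W : Submodule K (m → K)) :
    (m → K) →ₗ[K] Module.Dual K W :=
  W.subtype.dualMap ∘ₗ (dotProductEquiv K m).toLinearMap

@[simp]
lemma Submodule.dotProductDual_apply (W : Submodule K (m → K)) (a : m → K) (v : W) :
    W.dotProductDual a v = a ⬝ᵥ (v : m → K) := rfl

lemma Submodule.dotProductDual_surjective (W : Submodule K (m → K)) :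
    Function.Surjective W.dotProductDual :=
  (LinearMap.dualMap_surjective_of_injective W.injective_subtype).comp
    (dotProductEquiv K m).surjective

lemma Matrix.ker_dotProductDual_range_mulVecLin (M : Matrix m n K) :
    LinearMap.ker (LinearMap.range M.mulVecLin).dotProductDual = LinearMap.ker Mᵀ.mulVecLin := by
  ext a
  simp only [LinearMap.mem_ker, LinearMap.ext_iff, Subtype.forall, LinearMap.mem_range,
    Submodule.dotProductDual_apply, LinearMap.zero_apply, forall_exists_index,
    forall_apply_eq_imp_iff, Matrix.mulVecLin_apply, Matrix.dotProduct_mulVec,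
    Matrix.mulVec_transpose]
  exact dotProduct_eq_zero_iff

noncomputable def Matrix.rangeTransposeEquivDual (M : Matrix m n K) :
    LinearMap.range Mᵀ.mulVecLin ≃ₗ[K] Module.Dual K (LinearMap.range M.mulVecLin) :=
  Mᵀ.mulVecLin.quotKerEquivRange.symm ≪≫ₗ
    Submodule.quotEquivOfEq _ _ M.ker_dotProductDual_range_mulVecLin.symm ≪≫ₗ
    LinearMap.quotKerEquivOfSurjective _ (Submodule.dotProductDual_surjective _)

lemma Matrix.rangeTransposeEquivDual_apply (M : Matrix m n K) (a : m → K)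
    (u : LinearMap.range Mᵀ.mulVecLin) (hu : (u : n → K) = Mᵀ *ᵥ a)
    (v : LinearMap.range M.mulVecLin) :
    M.rangeTransposeEquivDual u v = a ⬝ᵥ (v : m → K) := by
  have hu' : Mᵀ.mulVecLin.quotKerEquivRange.symm u = Submodule.Quotient.mk a := by
    rw [LinearEquiv.symm_apply_eq]
    exact Subtype.ext hu
  simp [rangeTransposeEquivDual, hu']

end DualOfColumnSpace

section Specht

variable {n : ℕ}

lemma Complementary.symm {w1 w2 : Fin n → ℕ} (h : Complementary w1 w2) :
    Complementary w2 w1 := by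
  obtain ⟨⟨⟨p, hp1, hp2, hpf⟩, huniq⟩, hfree⟩ := h
  refine ⟨⟨⟨p.swap, hp2, hp1, fun σ h1 h2 => hpf σ h2 h1⟩, ?_⟩, fun σ h1 h2 => hfree σ h2 h1⟩
  intro q r hq1 hq2 hqf hr1 hr2 hrf
  obtain ⟨σ, hσ1, hσ2⟩ := huniq q.swap r.swap hq2 hq1 (fun σ a b => hqf σ b a) hr2 hr1
    (fun σ a b => hrf σ b a)
  exact ⟨σ, hσ2, hσ1⟩

lemma wact_injective (σ : Equiv.Perm (Fin n)) : Function.Injective (wact σ) :=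
  fun _ _ h => funext fun i => by simpa [wact] using congrFun h (σ i)

lemma youngChar_comm (w1 w2 r1 r2 : Fin n → ℕ) :
    youngChar w2 w1 r2 r1 = youngChar w1 w2 r1 r2 :=
  Finset.sum_congr rfl fun _ _ => if_congr and_comm rfl rfl

lemma youngChar_wact (w1 w2 : Fin n → ℕ) (σ : Equiv.Perm (Fin n)) (r1 r2 : Fin n → ℕ) :
    youngChar w1 w2 (wact σ r1) (wact σ r2) = Equiv.Perm.sign σ * youngChar w1 w2 r1 r2 := by
  rw [youngChar, youngChar, Finset.mul_sum, ← Equiv.sum_comp (Equiv.mulLeft σ)]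
  refine Finset.sum_congr rfl fun τ _ => ?_
  simp only [Equiv.coe_mulLeft, ← wact_wact, (wact_injective σ).eq_iff, Equiv.Perm.sign_mul,
    Units.val_mul, mul_ite, mul_zero]

lemma ract_ract {w : Fin n → ℕ} (σ τ : Equiv.Perm (Fin n)) (r : Rearr w) :
    ract σ (ract τ r) = ract (σ * τ) r := rfl

lemma ract_one {w : Fin n → ℕ} (r : Rearr w) : ract 1 r = r := rfl

def ractEquiv {w : Fin n → ℕ} (σ : Equiv.Perm (Fin n)) : Rearr w ≃ Rearr w where
  toFun := ract σ
  invFun := ract σ⁻¹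
  left_inv r := by rw [ract_ract, inv_mul_cancel, ract_one]
  right_inv r := by rw [ract_ract, mul_inv_cancel, ract_one]

lemma factC_dotProduct {w : Fin n → ℕ} (σ : Equiv.Perm (Fin n)) (f g : Rearr w → ℂ) :
    factC σ f ⬝ᵥ g = f ⬝ᵥ factC σ⁻¹ g := by
  simp only [dotProduct, factC, inv_inv]
  exact Fintype.sum_equiv (ractEquiv σ⁻¹) _ _ fun r => by
    simp [ractEquiv, ract_ract, ract_one]

noncomputable def spechtMatrix (w1 w2 : Fin n → ℕ) : Matrix (Rearr w1) (Rearr w2) ℂ :=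
  Matrix.of fun r1 r2 => (youngChar w1 w2 r1.1 r2.1 : ℂ)

lemma spechtMatrix_transpose (w1 w2 : Fin n → ℕ) :
    (spechtMatrix w1 w2)ᵀ = spechtMatrix w2 w1 := by
  ext r2 r1
  simp [spechtMatrix, youngChar_comm]

lemma spechtModule_eq_range (w1 w2 : Fin n → ℕ) :
    SpechtModule w1 w2 = LinearMap.range (spechtMatrix w1 w2).mulVecLin := by
  rw [Matrix.range_mulVecLin]
  rfl

lemma factC_spechtMatrix_mulVec (w1 w2 : Fin n → ℕ) (σ : Equiv.Perm (Fin n))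
    (b : Rearr w2 → ℂ) :
    factC σ (spechtMatrix w1 w2 *ᵥ b)
      = ((Equiv.Perm.sign σ : ℤ) : ℂ) • spechtMatrix w1 w2 *ᵥ factC σ b := by
  funext r1
  simp only [factC, mulVec, dotProduct, Pi.smul_apply, smul_eq_mul, Finset.mul_sum]
  rw [← Equiv.sum_comp (ractEquiv σ⁻¹)]
  refine Finset.sum_congr rfl fun t _ => ?_
  have hY : youngChar w1 w2 (ract σ⁻¹ r1).1 (ract σ⁻¹ t).1
      = Equiv.Perm.sign σ * youngChar w1 w2 r1.1 t.1 := by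
    rw [ract, ract, youngChar_wact, Equiv.Perm.sign_inv]
  simp [spechtMatrix, ractEquiv, hY, mul_assoc]

end Specht

/-- For complementary words `w1, w2`, there is a `ℂ`-linear isomorphism
`Φ : V(w2, w1) ≃ (V(w1, w2))^∨` with `Φ(σ·u) = sign(σ) · (σ·Φ(u))`, i.e.
`V(λ*) ≃ V(λ)^∨ ⊗ ε` as `S_n`-representations.  The equivariance is expressed by
evaluating both sides: whenever `u' = σ·u` in `V(w2, w1)` and `v' = σ⁻¹·v` in
`V(w1, w2)`, we have `Φ(u')(v) = sign(σ) · Φ(u)(v')`. -/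
theorem specht_stmt_6 {n : ℕ} (w1 w2 : Fin n → ℕ) (h : Complementary w1 w2) :
    Complementary w2 w1 ∧
    ∃ Φ : ↥(SpechtModule w2 w1) ≃ₗ[ℂ] Module.Dual ℂ ↥(SpechtModule w1 w2),
      ∀ (σ : Equiv.Perm (Fin n)) (u u' : SpechtModule w2 w1),
        (u' : Rearr w2 → ℂ) = factC σ (u : Rearr w2 → ℂ) →
        ∀ (v v' : SpechtModule w1 w2),
          (v' : Rearr w1 → ℂ) = factC σ⁻¹ (v : Rearr w1 → ℂ) →
          Φ u' v = ((Equiv.Perm.sign σ : ℤ) : ℂ) * Φ u v' := by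
  refine ⟨h.symm, ?_⟩
  set M := spechtMatrix w1 w2
  rw [spechtModule_eq_range w1 w2, spechtModule_eq_range w2 w1, ← spechtMatrix_transpose]
  refine ⟨M.rangeTransposeEquivDual, fun σ u u' hu' v v' hv' => ?_⟩
  obtain ⟨a, ha⟩ := u.2
  have hu'a : (u' : Rearr w2 → ℂ) = Mᵀ *ᵥ (((Equiv.Perm.sign σ : ℤ) : ℂ) • factC σ a) := by
    rw [hu', ← ha, Matrix.mulVecLin_apply, spechtMatrix_transpose, factC_spechtMatrix_mulVec,
      Matrix.mulVec_smul]
  rw [M.rangeTransposeEquivDual_apply _ u' hu'a, M.rangeTransposeEquivDual_apply a u ha.symm,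
    hv', smul_dotProduct, factC_dotProduct, smul_eq_mul]
end

section
/- Let w1, w2 be complementary words of length n, and suppose w1 has a repeated letter, i.e., w1(i) = w1(j) for some i ≠ j (equivalently, the corresponding partition λ is not (1,1,…,1)). Then for every r1 ∈ R(w1), the sum Σ_{r2 ∈ R(w2)} Y(r1, r2) equals 0; equivalently, every row of the Specht matrix has as many entries equal to 1 as entries equal to −1, and the sum of all columns of the Specht matrix is the zero vector. -/
/-
Summing `Y(r1, r2)` over all `r2` forgets the condition on `w2`, leaving the signed count of
the permutations `σ` with `σ·w1 = r1`. If `w1 i = w1 j` with `i ≠ j`, right multiplication by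
the transposition `(i j)` is a fixed-point-free involution of this set of permutations which
reverses signs, so the signed count vanishes.
-/

theorem wact_swap_of_eq {n : ℕ} {w : Fin n → ℕ} {i j : Fin n} (h : w i = w j) :
    wact (Equiv.swap i j) w = w := by
  funext x
  simp only [wact, Function.comp_apply, Equiv.symm_swap]
  rcases eq_or_ne x i with rfl | hi
  · simpa using h.symm
  rcases eq_or_ne x j with rfl | hj
  · simpa using h
  · rw [Equiv.swap_apply_of_ne_of_ne hi hj]

theorem sum_rearr_youngChar {n : ℕ} (w1 w2 r1 : Fin n → ℕ) :
    ∑ r2 : Rearr w2, youngChar w1 w2 r1 r2.1 =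
      ∑ σ ∈ Finset.univ.filter (fun σ : Equiv.Perm (Fin n) => wact σ w1 = r1),
        (Equiv.Perm.sign σ : ℤ) := by
  rw [Finset.sum_filter]
  simp only [youngChar]
  rw [Finset.sum_comm]
  refine Finset.sum_congr rfl fun σ _ => ?_
  rw [Finset.sum_eq_single_of_mem (⟨wact σ w2, σ, rfl⟩ : Rearr w2) (Finset.mem_univ _)]
  · simp
  · rintro r2 - hr2
    rw [if_neg]
    rintro ⟨-, h2⟩
    exact hr2 (Subtype.ext h2.symm)

theorem sum_sign_filter_wact_eq_zero {n : ℕ} {w : Fin n → ℕ} (r : Fin n → ℕ) {i j : Fin n}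
    (hij : i ≠ j) (h : w i = w j) :
    ∑ σ ∈ Finset.univ.filter (fun σ : Equiv.Perm (Fin n) => wact σ w = r),
      (Equiv.Perm.sign σ : ℤ) = 0 := by
  refine Finset.sum_involution (fun σ _ => σ * Equiv.swap i j) ?_ ?_ ?_ ?_
  · intro σ _
    simp [Equiv.Perm.sign_swap hij]
  · intro σ _ _ hσ
    exact hij (Equiv.swap_eq_one_iff.mp (mul_eq_left.mp hσ))
  · intro σ hσ
    simp only [Finset.mem_filter, Finset.mem_univ, true_and] at hσ ⊢
    rw [← wact_wact, wact_swap_of_eq h, hσ]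
  · intro σ _
    simp [mul_assoc]

theorem specht_stmt_9_general {n : ℕ} (w1 w2 : Fin n → ℕ)
    (hrep : ∃ i j : Fin n, i ≠ j ∧ w1 i = w1 j) :
    (∀ r1 : Fin n → ℕ, IsRearr w1 r1 → ∑ r2 : Rearr w2, youngChar w1 w2 r1 r2.1 = 0) ∧
    ∑ r2 : Rearr w2, spechtColR w1 w2 r2 = 0 := by
  obtain ⟨i, j, hij, hw⟩ := hrep
  have row_sum (r1 : Fin n → ℕ) : ∑ r2 : Rearr w2, youngChar w1 w2 r1 r2.1 = 0 := by
    rw [sum_rearr_youngChar, sum_sign_filter_wact_eq_zero r1 hij hw]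
  refine ⟨fun r1 _ => row_sum r1, ?_⟩
  funext r1
  simp only [Finset.sum_apply, spechtColR, Pi.zero_apply]
  exact_mod_cast row_sum r1.1

/-- If `w1` has a repeated letter, then every row of the Specht matrix
sums to zero; equivalently the sum of all columns of the Specht matrix is `0`. -/
theorem specht_stmt_9 {n : ℕ} (w1 w2 : Fin n → ℕ) (hc : Complementary w1 w2)
    (hrep : ∃ i j : Fin n, i ≠ j ∧ w1 i = w1 j) :
    (∀ r1 : Fin n → ℕ, IsRearr w1 r1 → ∑ r2 : Rearr w2, youngChar w1 w2 r1 r2.1 = 0) ∧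
    ∑ r2 : Rearr w2, spechtColR w1 w2 r2 = 0 :=
  specht_stmt_9_general w1 w2 hrep
end
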